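/- Suppose Δ ∈ ℝ^{d×T} satisfies ‖Δ‖_* ≤ 4√(2r) ‖Δ‖_F (the cone condition implied by 3‖Δ₁‖_* ≥ ‖Δ₂‖_* with ‖Δ₁‖_* ≤ √(2r)‖Δ‖_F). Then for any r' ≥ 1, writing Δ_{r'} for the best rank-r' approximation of Δ, one has ‖Δ − Δ_{r'}‖_F ≤ √(32 r / r') · ‖Δ‖_F. -/

import Mathlib

open Matrix MeasureTheory

noncomputable def nuclearNorm {d T : ℕ} (A : Matrix (Fin d) (Fin T) ℝ) : ℝ :=
  ∑ i, Real.sqrt ((show (Aᵀ * A).IsHermitian by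
    simpa [Matrix.conjTranspose_eq_transpose_of_trivial] using
      Matrix.isHermitian_conjTranspose_mul_self A).eigenvalues i)

noncomputable def frobNorm {d T : ℕ} (A : Matrix (Fin d) (Fin T) ℝ) : ℝ :=
  Real.sqrt (∑ i, ∑ j, (A i j) ^ 2)

noncomputable def opNorm {m n : ℕ} (A : Matrix (Fin m) (Fin n) ℝ) : ℝ :=
  ‖LinearMap.toContinuousLinearMap (Matrix.toEuclideanLin A)‖

noncomputable def minEig {n : ℕ} (A : Matrix (Fin n) (Fin n) ℝ) (hA : A.IsHermitian) : ℝ :=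
  ⨅ i, hA.eigenvalues i

noncomputable def colNorm {d T : ℕ} (A : Matrix (Fin d) (Fin T) ℝ) (t : Fin T) : ℝ :=
  Real.sqrt (∑ i, (A i t) ^ 2)

/-- `sin θ(B, B̃)`: sine of the largest principal angle between column spaces,
equal to the operator norm of `(I - B̃ B̃ᵀ) B`. -/
noncomputable def sinTheta {d r : ℕ} (B Bt : Matrix (Fin d) (Fin r) ℝ) : ℝ :=
  opNorm ((1 - Bt * Btᵀ) * B)

/-!
Let `σₖ = √λₖ(ΔᵀΔ)` be the singular values of `Δ`, so that `S = ∑ σₖ = ‖Δ‖_*`, and keep the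
directions with `σₖ > S / r'`. By Markov's counting argument there are at most `r'` of them, so
projecting `Δ` onto the corresponding eigenvectors of `ΔᵀΔ` gives a matrix of rank at most `r'`,
and the discarded part has `∑_{σₖ ≤ S/r'} σₖ² ≤ (S / r') · S ≤ 32 r ‖Δ‖_F² / r'` by the cone
condition. The best rank-`r'` approximation does at least as well.
-/

open Finset

lemma frobNorm_nonneg {d T : ℕ} (A : Matrix (Fin d) (Fin T) ℝ) : 0 ≤ frobNorm A :=
  Real.sqrt_nonneg _

lemma frobNorm_sq_eq_trace {d T : ℕ} (A : Matrix (Fin d) (Fin T) ℝ) :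
    frobNorm A ^ 2 = trace (Aᵀ * A) := by
  rw [frobNorm, Real.sq_sqrt (by positivity), trace, sum_comm]
  simp [mul_apply, sq]

lemma isHermitian_transpose_mul_self {d T : ℕ} (A : Matrix (Fin d) (Fin T) ℝ) :
    (Aᵀ * A).IsHermitian :=
  isHermitian_conjTranspose_mul_self A

lemma eigenvalues_transpose_mul_self_nonneg {d T : ℕ} (A : Matrix (Fin d) (Fin T) ℝ)
    (k : Fin T) :
    0 ≤ (isHermitian_transpose_mul_self A).eigenvalues k :=
  eigenvalues_conjTranspose_mul_self_nonneg A k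

lemma nuclearNorm_eq_sum_sqrt_eigenvalues {d T : ℕ} (A : Matrix (Fin d) (Fin T) ℝ) :
    nuclearNorm A = ∑ k, √((isHermitian_transpose_mul_self A).eigenvalues k) :=
  rfl

lemma nuclearNorm_nonneg {d T : ℕ} (A : Matrix (Fin d) (Fin T) ℝ) : 0 ≤ nuclearNorm A := by
  rw [nuclearNorm_eq_sum_sqrt_eigenvalues]
  exact sum_nonneg fun _ _ => Real.sqrt_nonneg _

section Truncation

variable {d T : ℕ} (A : Matrix (Fin d) (Fin T) ℝ) (h : (Aᵀ * A).IsHermitian)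

local notation "U" => (h.eigenvectorUnitary : Matrix (Fin T) (Fin T) ℝ)

lemma eigenvectorUnitary_mul_transpose : U * Uᵀ = 1 := by
  simpa [star_eq_conjTranspose] using mem_unitaryGroup_iff.mp h.eigenvectorUnitary.2

lemma transpose_eigenvectorUnitary_mul : Uᵀ * U = 1 := by
  simpa [star_eq_conjTranspose] using mem_unitaryGroup_iff'.mp h.eigenvectorUnitary.2

lemma transpose_eigenvectorUnitary_mul_mul_eigenvectorUnitary :
    Uᵀ * (Aᵀ * A) * U = diagonal h.eigenvalues := by
  simpa [Unitary.conjStarAlgAut_star_apply, star_eq_conjTranspose] using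
    h.conjStarAlgAut_star_eigenvectorUnitary

lemma frobNorm_mul_conj_diagonal_sq (w : Fin T → ℝ) :
    frobNorm (A * (U * diagonal w * Uᵀ)) ^ 2 = ∑ k, w k ^ 2 * h.eigenvalues k := by
  have hconj : (A * (U * diagonal w * Uᵀ))ᵀ * (A * (U * diagonal w * Uᵀ)) =
      U * (diagonal w * (Uᵀ * (Aᵀ * A) * U) * diagonal w) * Uᵀ := by
    simp only [transpose_mul, diagonal_transpose, transpose_transpose, Matrix.mul_assoc]
  rw [frobNorm_sq_eq_trace, hconj, trace_mul_comm, ← Matrix.mul_assoc,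
    transpose_eigenvectorUnitary_mul, Matrix.one_mul,
    transpose_eigenvectorUnitary_mul_mul_eigenvectorUnitary, diagonal_mul_diagonal,
    diagonal_mul_diagonal, trace_diagonal]
  exact sum_congr rfl fun k _ => by ring

lemma exists_rank_le_card_frobNorm_sub_sq_eq (K : Finset (Fin T)) :
    ∃ L : Matrix (Fin d) (Fin T) ℝ, L.rank ≤ #K ∧
      frobNorm (A - L) ^ 2 = ∑ k ∈ Kᶜ, h.eigenvalues k := by
  set w : Fin T → ℝ := fun k => if k ∈ K then 1 else 0
  refine ⟨A * (U * diagonal w * Uᵀ), ?_, ?_⟩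
  · calc (A * (U * diagonal w * Uᵀ)).rank ≤ (diagonal w).rank :=
          (rank_mul_le_right _ _).trans <| (rank_mul_le_left _ _).trans (rank_mul_le_right _ _)
      _ = #K := by simp [rank_diagonal, w, Fintype.card_subtype]
  · have hsub : A - A * (U * diagonal w * Uᵀ) = A * (U * diagonal (1 - w) * Uᵀ) := by
      rw [show diagonal (1 - w) = 1 - diagonal w by rw [← diagonal_one, diagonal_sub]; rfl,
        Matrix.mul_sub, Matrix.sub_mul, Matrix.mul_one,
        eigenvectorUnitary_mul_transpose, Matrix.mul_sub, Matrix.mul_one]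
    rw [hsub, frobNorm_mul_conj_diagonal_sq, ← sum_add_sum_compl K]
    rw [sum_eq_zero fun k hk => by simp [w, hk], zero_add]
    exact sum_congr rfl fun k hk => by simp [w, mem_compl.1 hk]

end Truncation

theorem exists_card_le_sum_compl_sq_le {ι : Type*} [Fintype ι] [DecidableEq ι] {σ : ι → ℝ}
    (hσ : ∀ i, 0 ≤ σ i) {n : ℕ} (hn : 0 < n) :
    ∃ K : Finset ι, #K ≤ n ∧ ∑ i ∈ Kᶜ, σ i ^ 2 ≤ (∑ i, σ i) ^ 2 / n := by
  set S := ∑ i, σ i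
  set c := S / n
  have hc : 0 ≤ c := div_nonneg (sum_nonneg fun i _ => hσ i) n.cast_nonneg
  set K : Finset ι := {i | c < σ i}
  refine ⟨K, ?_, ?_⟩
  · rcases K.eq_empty_or_nonempty with hK | hK
    · simp [hK]
    have hlt : (#K : ℝ) * c < n * c :=
      calc (#K : ℝ) * c = ∑ i ∈ K, c := by simp
        _ < ∑ i ∈ K, σ i := sum_lt_sum_of_nonempty hK fun i hi => (mem_filter.1 hi).2
        _ ≤ S := sum_le_sum_of_subset_of_nonneg (subset_univ _) fun i _ _ => hσ i
        _ = n * c := (mul_div_cancel₀ S (by positivity)).symm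
    exact_mod_cast (lt_of_mul_lt_mul_right hlt hc).le
  · calc ∑ i ∈ Kᶜ, σ i ^ 2 ≤ ∑ i ∈ Kᶜ, c * σ i :=
          sum_le_sum fun i hi => by
            rw [sq]
            exact mul_le_mul_of_nonneg_right (by simpa [K] using hi) (hσ i)
      _ ≤ ∑ i, c * σ i := sum_le_sum_of_subset_of_nonneg (subset_univ _)
          fun i _ _ => mul_nonneg hc (hσ i)
      _ = S ^ 2 / n := by rw [← mul_sum]; ring

theorem cone_truncation_bound_general {d T : ℕ} (r r' : ℕ) (hr' : 1 ≤ r')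
    (Δ Δr : Matrix (Fin d) (Fin T) ℝ)
    (hcone : nuclearNorm Δ ≤ 4 * Real.sqrt (2 * r) * frobNorm Δ)
    (hbest : ∀ L : Matrix (Fin d) (Fin T) ℝ, L.rank ≤ r' →
      frobNorm (Δ - Δr) ≤ frobNorm (Δ - L)) :
    frobNorm (Δ - Δr) ≤ Real.sqrt (32 * r / r') * frobNorm Δ := by
  set h := isHermitian_transpose_mul_self Δ
  obtain ⟨K, hK, htail⟩ := exists_card_le_sum_compl_sq_le
    (fun k => Real.sqrt_nonneg (h.eigenvalues k)) hr'
  obtain ⟨L, hL, hΔL⟩ := exists_rank_le_card_frobNorm_sub_sq_eq Δ h K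
  have hsq : frobNorm (Δ - Δr) ^ 2 ≤ 32 * r / r' * frobNorm Δ ^ 2 :=
    calc frobNorm (Δ - Δr) ^ 2 ≤ frobNorm (Δ - L) ^ 2 := by
          gcongr
          exacts [frobNorm_nonneg _, hbest L (hL.trans hK)]
      _ = ∑ k ∈ Kᶜ, √(h.eigenvalues k) ^ 2 := by
          rw [hΔL]
          simp only [Real.sq_sqrt (eigenvalues_transpose_mul_self_nonneg Δ _)]
      _ ≤ nuclearNorm Δ ^ 2 / r' := by rw [nuclearNorm_eq_sum_sqrt_eigenvalues]; exact htail
      _ ≤ (4 * √(2 * r) * frobNorm Δ) ^ 2 / r' := by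
          gcongr
          exact nuclearNorm_nonneg Δ
      _ = 32 * r / r' * frobNorm Δ ^ 2 := by
          rw [mul_pow, mul_pow, Real.sq_sqrt (by positivity)]
          ring
  rw [← Real.sqrt_sq (frobNorm_nonneg Δ), ← Real.sqrt_mul (by positivity)]
  exact Real.le_sqrt_of_sq_le hsq

theorem cone_truncation_bound {d T : ℕ} (r r' : ℕ) (hr' : 1 ≤ r')
    (Δ Δr : Matrix (Fin d) (Fin T) ℝ)
    (hcone : nuclearNorm Δ ≤ 4 * Real.sqrt (2 * r) * frobNorm Δ)
    (hrank : Δr.rank ≤ r')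
    (hbest : ∀ L : Matrix (Fin d) (Fin T) ℝ, L.rank ≤ r' →
      frobNorm (Δ - Δr) ≤ frobNorm (Δ - L)) :
    frobNorm (Δ - Δr) ≤ Real.sqrt (32 * r / r') * frobNorm Δ :=
  cone_truncation_bound_general r r' hr' Δ Δr hcone hbest
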